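/- arXiv:2402.03919 — 5 statements merged into one kernel-verified Lean document; each statement's English description precedes it below -/
import Mathlib

section
/- The function A ↦ log det(I + A) is concave on the cone of positive semidefinite Hermitian n×n matrices. -/
open scoped ComplexOrder

open Matrix Finset

private lemma real_smul_matrix {m : ℕ} (a : ℝ) (A : Matrix (Fin m) (Fin m) ℂ) :
    a • A = (a : ℂ) • A := by
  ext i j
  simp [Complex.real_smul]

private lemma posSemidef_csmul {m : ℕ} {A : Matrix (Fin m) (Fin m) ℂ}
    (hA : A.PosSemidef) {a : ℝ} (ha : 0 ≤ a) : ((a : ℂ) • A).PosSemidef := by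
  refine ⟨?_, fun x => ?_⟩
  · rw [IsHermitian, conjTranspose_smul, hA.1.eq, Complex.star_def, Complex.conj_ofReal]
  · exact (hA.smul (a := (a : ℂ)) (by exact_mod_cast ha)).2 x

open scoped MatrixOrder in
private lemma key_ineq {m : ℕ} {M N : Matrix (Fin m) (Fin m) ℂ}
    (hM : M.PosDef) (hN : N.PosDef) {a b : ℝ} (ha : 0 ≤ a) (hb : 0 ≤ b)
    (hab : a + b = 1) :
    a * Real.log M.det.re + b * Real.log N.det.re ≤
      Real.log (((a : ℂ) • M + (b : ℂ) • N).det.re) := by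
  classical
  -- real parts of determinants
  obtain ⟨hMre, hMim⟩ := Complex.lt_def.mp hM.det_pos
  obtain ⟨hNre, hNim⟩ := Complex.lt_def.mp hN.det_pos
  simp only [Complex.zero_re, Complex.zero_im] at hMre hMim hNre hNim
  have hMdet : M.det = (M.det.re : ℂ) := by
    exact (Complex.ext (by simp) (by simp [← hMim]))
  have hNdet : N.det = (N.det.re : ℂ) := by
    exact (Complex.ext (by simp) (by simp [← hNim]))
  set S := CFC.sqrt M with hSdef
  have hS : S.PosSemidef := (CFC.sqrt_nonneg M).posSemidef
  have hSS : S * S = M := CFC.sqrt_mul_sqrt_self M hM.posSemidef.nonneg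
  have hdSS : S.det * S.det = M.det := by rw [← det_mul, hSS]
  have hSne : S.det ≠ 0 := by
    intro h
    rw [h, mul_zero] at hdSS
    exact hM.det_pos.ne' hdSS.symm
  have hSu : IsUnit S.det := hSne.isUnit
  set D := S⁻¹ * N * S⁻¹ with hDdef
  have hSinvH : (S⁻¹)ᴴ = S⁻¹ := by rw [conjTranspose_nonsing_inv, hS.1.eq]
  have hD : D.PosSemidef := by
    have := hN.posSemidef.conjTranspose_mul_mul_same (S⁻¹)
    rwa [hSinvH] at this
  have hSDS : S * D * S = N := by
    rw [hDdef, Matrix.mul_assoc, Matrix.mul_assoc, Matrix.nonsing_inv_mul S hSu,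
      Matrix.mul_one, ← Matrix.mul_assoc, Matrix.mul_nonsing_inv S hSu, Matrix.one_mul]
  have key : (a : ℂ) • M + (b : ℂ) • N = S * ((a : ℂ) • 1 + (b : ℂ) • D) * S := by
    rw [Matrix.mul_add, Matrix.add_mul, mul_smul_comm, smul_mul_assoc, Matrix.mul_one,
      mul_smul_comm, smul_mul_assoc, hSS, hSDS]
  -- eigenvalues of D
  set μ := hD.1.eigenvalues with hμdef
  have hμ : ∀ i, 0 ≤ μ i := hD.eigenvalues_nonneg
  set U : Matrix (Fin m) (Fin m) ℂ := (hD.1.eigenvectorUnitary : Matrix (Fin m) (Fin m) ℂ)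
    with hUdef
  have hU : U * star U = 1 := (Matrix.mem_unitaryGroup_iff).mp hD.1.eigenvectorUnitary.2
  have hsp : D = U * diagonal (RCLike.ofReal ∘ μ) * star U := hD.1.spectral_theorem
  have hconj : (a : ℂ) • 1 + (b : ℂ) • D
      = U * ((a : ℂ) • 1 + (b : ℂ) • diagonal (RCLike.ofReal ∘ μ)) * star U := by
    rw [Matrix.mul_add, Matrix.add_mul, mul_smul_comm, smul_mul_assoc, mul_smul_comm,
      smul_mul_assoc, Matrix.mul_one, hU, ← hsp]
  have hdetIn : ((a : ℂ) • 1 + (b : ℂ) • D).det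
      = ∏ i, ((a : ℂ) + (b : ℂ) * (μ i : ℂ)) := by
    rw [hconj, det_mul_right_comm, hU, Matrix.one_mul]
    have : (a : ℂ) • (1 : Matrix (Fin m) (Fin m) ℂ) + (b : ℂ) • diagonal (RCLike.ofReal ∘ μ)
        = diagonal (fun i => (a : ℂ) + (b : ℂ) * (μ i : ℂ)) := by
      ext i j
      rcases eq_or_ne i j with h | h
      · subst h
        simp [Matrix.diagonal_apply_eq, Matrix.one_apply_eq]
      · simp [Matrix.diagonal_apply_ne _ h, Matrix.one_apply_ne h]
    rw [this, det_diagonal]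
  have hdet1 : ((a : ℂ) • M + (b : ℂ) • N).det
      = M.det * ∏ i, ((a : ℂ) + (b : ℂ) * (μ i : ℂ)) := by
    rw [key, det_mul, det_mul, hdetIn, ← hdSS]
    ring
  -- product of eigenvalues
  have hdetD : (∏ i, (μ i : ℂ)) = (N.det.re / M.det.re : ℝ) := by
    have hDdet : D.det = S.det⁻¹ * N.det * S.det⁻¹ := by
      rw [hDdef, det_mul, det_mul, det_nonsing_inv, Ring.inverse_eq_inv']
    have h2 : D.det = ∏ i, (μ i : ℂ) := hD.1.det_eq_prod_eigenvalues
    have h3 : S.det⁻¹ * N.det * S.det⁻¹ = N.det / M.det := by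
      rw [← hdSS]
      field_simp
    rw [← h2, hDdet, h3, Complex.ofReal_div, ← hMdet, ← hNdet]
  have hprodμ : (∏ i, μ i) = N.det.re / M.det.re := by
    have : ((∏ i, μ i : ℝ) : ℂ) = ((N.det.re / M.det.re : ℝ) : ℂ) := by
      rw [Complex.ofReal_prod]; exact hdetD
    exact_mod_cast this
  -- real part of the combined determinant
  have hre : ((a : ℂ) • M + (b : ℂ) • N).det.re = M.det.re * ∏ i, (a + b * μ i) := by
    rw [hdet1, hMdet]
    have : (∏ i, ((a : ℂ) + (b : ℂ) * (μ i : ℂ))) = ((∏ i, (a + b * μ i) : ℝ) : ℂ) := by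
      rw [Complex.ofReal_prod]
      exact Finset.prod_congr rfl fun i _ => by push_cast; ring
    rw [this, ← Complex.ofReal_mul, Complex.ofReal_re]
    simp
  -- the scalar inequality
  have hfac : ∀ i, μ i ^ b ≤ a + b * μ i := by
    intro i
    have := Real.geom_mean_le_arith_mean2_weighted ha hb zero_le_one (hμ i) hab
    simpa using this
  have hstep : (N.det.re / M.det.re) ^ b ≤ ∏ i, (a + b * μ i) := by
    rw [← hprodμ, ← Real.finset_prod_rpow _ _ (fun i _ => hμ i)]
    exact Finset.prod_le_prod (fun i _ => Real.rpow_nonneg (hμ i) b) (fun i _ => hfac i)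
  have hmain : M.det.re ^ a * N.det.re ^ b ≤ M.det.re * ∏ i, (a + b * μ i) := by
    have h1 : M.det.re ^ a * N.det.re ^ b = M.det.re * (N.det.re / M.det.re) ^ b := by
      rw [Real.div_rpow (le_of_lt hNre) (le_of_lt hMre), ← mul_div_assoc,
        eq_div_iff (ne_of_gt (Real.rpow_pos_of_pos hMre b)), mul_right_comm,
        ← Real.rpow_add hMre, hab, Real.rpow_one]
    rw [h1]
    exact mul_le_mul_of_nonneg_left hstep (le_of_lt hMre)
  -- conclude with logs
  have hposl : 0 < M.det.re ^ a * N.det.re ^ b :=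
    mul_pos (Real.rpow_pos_of_pos hMre a) (Real.rpow_pos_of_pos hNre b)
  calc a * Real.log M.det.re + b * Real.log N.det.re
      = Real.log (M.det.re ^ a * N.det.re ^ b) := by
        rw [Real.log_mul (ne_of_gt (Real.rpow_pos_of_pos hMre a))
          (ne_of_gt (Real.rpow_pos_of_pos hNre b)), Real.log_rpow hMre, Real.log_rpow hNre]
    _ ≤ Real.log (M.det.re * ∏ i, (a + b * μ i)) := Real.log_le_log hposl hmain
    _ = Real.log (((a : ℂ) • M + (b : ℂ) • N).det.re) := by rw [hre]

theorem stmt_5 {n : ℕ} :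
    ConcaveOn ℝ {A : Matrix (Fin n) (Fin n) ℂ | A.PosSemidef}
      (fun A => Real.log ((1 + A).det.re)) := by
  constructor
  · intro A hA B hB a b ha hb hab
    show (a • A + b • B).PosSemidef
    rw [real_smul_matrix, real_smul_matrix]
    exact (posSemidef_csmul hA ha).add (posSemidef_csmul hB hb)
  · intro A hA B hB a b ha hb hab
    simp only [smul_eq_mul]
    have hMA : (1 + A).PosDef := Matrix.PosDef.one.add_posSemidef hA
    have hMB : (1 + B).PosDef := Matrix.PosDef.one.add_posSemidef hB
    have hrw : (1 : Matrix (Fin n) (Fin n) ℂ) + (a • A + b • B)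
        = (a : ℂ) • (1 + A) + (b : ℂ) • (1 + B) := by
      rw [smul_add, smul_add, real_smul_matrix, real_smul_matrix]
      have h1 : (a : ℂ) • (1 : Matrix (Fin n) (Fin n) ℂ) + (b : ℂ) • 1 = 1 := by
        rw [← add_smul, ← Complex.ofReal_add, hab, Complex.ofReal_one, one_smul]
      calc (1 : Matrix (Fin n) (Fin n) ℂ) + ((a : ℂ) • A + (b : ℂ) • B)
          = ((a : ℂ) • (1 : Matrix (Fin n) (Fin n) ℂ) + (b : ℂ) • 1)
            + ((a : ℂ) • A + (b : ℂ) • B) := by rw [h1]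
        _ = ((a : ℂ) • (1 : Matrix (Fin n) (Fin n) ℂ) + (a : ℂ) • A)
            + ((b : ℂ) • 1 + (b : ℂ) • B) := by abel
    rw [hrw]
    exact key_ineq hMA hMB ha hb hab
end

section
/- Let T be an N_T×N_T positive semidefinite Hermitian matrix of rank r ≤ N_S, ρ > 0, and suppose δ ≥ 0 satisfies the fixed-point equation δ = (1/N_S) tr(T (I + (ρ/(1+ρδ)) T)^{-1}). Then δ ≤ r/(ρ(N_S − r)) whenever N_S > r. -/
open scoped ComplexOrder

theorem stmt_8 {NT : ℕ} (T : Matrix (Fin NT) (Fin NT) ℂ) (hT : T.PosSemidef)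
    (NS : ℕ) (ρ δ : ℝ) (hρ : 0 < ρ) (hδ : 0 ≤ δ)
    (hfix : δ = (1 / (NS : ℝ)) *
      (Matrix.trace (T * (1 + ((ρ / (1 + ρ * δ) : ℝ) : ℂ) • T)⁻¹)).re)
    (hr : T.rank ≤ NS) (hlt : T.rank < NS) :
    δ ≤ (T.rank : ℝ) / (ρ * ((NS : ℝ) - (T.rank : ℝ))) := by
  have hH : T.IsHermitian := hT.1
  set c : ℝ := ρ / (1 + ρ * δ) with hcdef
  have h1ρδ : 0 < 1 + ρ * δ := by positivity
  have hc : 0 < c := div_pos hρ h1ρδ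
  set U : Matrix (Fin NT) (Fin NT) ℂ := (hH.eigenvectorUnitary : Matrix (Fin NT) (Fin NT) ℂ)
    with hUdef
  set lam := hH.eigenvalues with hlam
  have hU1 : U * star U = 1 := (Matrix.mem_unitaryGroup_iff).mp hH.eigenvectorUnitary.2
  have hU2 : star U * U = 1 := (Matrix.mem_unitaryGroup_iff').mp hH.eigenvectorUnitary.2
  have hconj : ∀ A B : Matrix (Fin NT) (Fin NT) ℂ,
      (U * A * star U) * (U * B * star U) = U * (A * B) * star U := by
    intro A B
    simp only [Matrix.mul_assoc]
    rw [← Matrix.mul_assoc (star U) U, hU2, Matrix.one_mul]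
  have hlam0 : ∀ i, 0 ≤ lam i := fun i => hT.eigenvalues_nonneg i
  have hpos : ∀ i, 0 < 1 + c * lam i := fun i => by
    have := hlam0 i; positivity
  have hdT : T = U * Matrix.diagonal (fun i => (lam i : ℂ)) * star U := by
    exact hH.spectral_theorem
  have h1 : (1 : Matrix (Fin NT) (Fin NT) ℂ) + (c : ℂ) • T
      = U * Matrix.diagonal (fun i => ((1 + c * lam i : ℝ) : ℂ)) * star U := by
    have e1 : (c : ℂ) • T = U * Matrix.diagonal (fun i => ((c * lam i : ℝ) : ℂ)) * star U := by
      rw [hdT, ← Matrix.smul_mul, ← Matrix.mul_smul]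
      congr 2
      ext i j
      by_cases h : i = j <;> simp [Matrix.diagonal, h]
    rw [e1]
    nth_rewrite 1 [← hU1]
    rw [← Matrix.add_mul]
    nth_rewrite 1 [← Matrix.mul_one U]
    rw [← Matrix.mul_add]
    congr 2
    rw [← Matrix.diagonal_one, Matrix.diagonal_add]
    congr 1
    funext i
    push_cast
    ring
  have hDE : (Matrix.diagonal fun i => ((1 + c * lam i : ℝ) : ℂ)) *
      (Matrix.diagonal fun i => (((1 + c * lam i)⁻¹ : ℝ) : ℂ)) = 1 := by
    have he : (fun i => ((1 + c * lam i : ℝ) : ℂ) * (((1 + c * lam i)⁻¹ : ℝ) : ℂ))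
        = fun _ => (1 : ℂ) := by
      funext i
      rw [← Complex.ofReal_mul, mul_inv_cancel₀ (hpos i).ne']
      simp
    rw [Matrix.diagonal_mul_diagonal, he, Matrix.diagonal_one]
  have hinv : (1 + (c : ℂ) • T)⁻¹
      = U * Matrix.diagonal (fun i => (((1 + c * lam i)⁻¹ : ℝ) : ℂ)) * star U := by
    apply Matrix.inv_eq_right_inv
    rw [h1, hconj, hDE, Matrix.mul_one, hU1]
  have key : (Matrix.trace (T * (1 + (c : ℂ) • T)⁻¹)).re
      = ∑ i, lam i / (1 + c * lam i) := by
    rw [hinv]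
    conv_lhs => rw [hdT]
    rw [hconj, Matrix.trace_mul_cycle, ← Matrix.mul_assoc, hU2, Matrix.one_mul,
      Matrix.diagonal_mul_diagonal, Matrix.trace_diagonal, Complex.re_sum]
    congr 1
    funext i
    rw [← Complex.ofReal_mul, Complex.ofReal_re, div_eq_mul_inv]
  have hsum : ∑ i, lam i / (1 + c * lam i) ≤ (T.rank : ℝ) / c := by
    classical
    set S := Finset.univ.filter (fun i => lam i ≠ 0) with hS
    have hcard : S.card = T.rank := by
      rw [hH.rank_eq_card_non_zero_eigs, Fintype.card_subtype]
    have h0 : ∑ i, lam i / (1 + c * lam i) = ∑ i ∈ S, lam i / (1 + c * lam i) := by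
      symm
      apply Finset.sum_subset (Finset.subset_univ _)
      intro i _ hi
      simp only [hS, Finset.mem_filter, Finset.mem_univ, true_and, not_not] at hi
      simp [hi]
    rw [h0]
    calc ∑ i ∈ S, lam i / (1 + c * lam i) ≤ S.card • (1 / c) := by
          apply Finset.sum_le_card_nsmul
          intro i _
          rw [div_le_div_iff₀ (hpos i) hc, one_mul]
          have := hlam0 i
          nlinarith
      _ = (T.rank : ℝ) / c := by
          rw [hcard, nsmul_eq_mul]
          ring
  have hNS : (T.rank : ℝ) < (NS : ℝ) := by exact_mod_cast hlt
  have hrnn : (0:ℝ) ≤ (T.rank : ℝ) := Nat.cast_nonneg _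
  have hNSpos : (0:ℝ) < (NS : ℝ) := lt_of_le_of_lt hrnn hNS
  have hrc : (T.rank : ℝ) / c = (T.rank : ℝ) * (1 + ρ * δ) / ρ := by
    rw [hcdef, div_div_eq_mul_div]
  have h2 : δ * (NS : ℝ) ≤ (T.rank : ℝ) * (1 + ρ * δ) / ρ := by
    have : δ * (NS : ℝ) = ∑ i, lam i / (1 + c * lam i) := by
      rw [hfix, key]
      field_simp
      exact Finset.sum_congr rfl fun i _ => by ring
    rw [this]
    rw [← hrc]
    exact hsum
  have h3 : ρ * (δ * (NS : ℝ)) ≤ (T.rank : ℝ) * (1 + ρ * δ) := by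
    rw [mul_comm]
    exact (le_div_iff₀ hρ).mp h2
  rw [le_div_iff₀ (by nlinarith : (0:ℝ) < ρ * ((NS : ℝ) - (T.rank : ℝ)))]
  nlinarith
end

section
/- With δ = δ(ρ) ≥ 0 satisfying δ = (1/N_S) tr(T (I + (ρ/(1+ρδ)) T)^{-1}) for a positive semidefinite Hermitian T of rank r with N_S > r ≥ 0, the deterministic-equivalent quantity ρ̄(Φ) = log det(I + (ρ/(1+ρδ)) T) + N_S log(1+ρδ) − N_S ρδ/(1+ρδ) satisfies ρ̄(Φ) ≥ ((N_S − r)/N_S) · log det(I + ρ T). -/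
open scoped ComplexOrder

open Matrix in
lemma aux_conj {n : ℕ} {T : Matrix (Fin n) (Fin n) ℂ} (hT : T.IsHermitian) (c : ℝ) :
    1 + ((c : ℝ) : ℂ) • T =
      (hT.eigenvectorUnitary : Matrix (Fin n) (Fin n) ℂ) *
        Matrix.diagonal (fun i => ((1 + c * hT.eigenvalues i : ℝ) : ℂ)) *
        star (hT.eigenvectorUnitary : Matrix (Fin n) (Fin n) ℂ) := by
  have hU : (hT.eigenvectorUnitary : Matrix (Fin n) (Fin n) ℂ) *
      star (hT.eigenvectorUnitary : Matrix (Fin n) (Fin n) ℂ) = 1 :=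
    Matrix.mem_unitaryGroup_iff.mp hT.eigenvectorUnitary.2
  have hdiag : Matrix.diagonal (fun i => ((1 + c * hT.eigenvalues i : ℝ) : ℂ)) =
      1 + (c : ℂ) • Matrix.diagonal (RCLike.ofReal ∘ hT.eigenvalues) := by
    ext i j
    rcases eq_or_ne i j with rfl | h
    · simp [Matrix.diagonal_apply_eq, Matrix.one_apply_eq, Function.comp]
    · simp [Matrix.diagonal_apply_ne _ h, Matrix.one_apply_ne h]
  rw [hdiag, mul_add, add_mul, mul_one, hU, Matrix.mul_smul, Matrix.smul_mul,
    ← (show T = (hT.eigenvectorUnitary : Matrix (Fin n) (Fin n) ℂ) *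
      Matrix.diagonal (RCLike.ofReal ∘ hT.eigenvalues) *
      star (hT.eigenvectorUnitary : Matrix (Fin n) (Fin n) ℂ) from hT.spectral_theorem)]

open Matrix in
lemma aux_det_re {n : ℕ} {T : Matrix (Fin n) (Fin n) ℂ} (hT : T.IsHermitian) (c : ℝ) :
    (1 + ((c : ℝ) : ℂ) • T).det.re = ∏ i, (1 + c * hT.eigenvalues i) := by
  have hU : (hT.eigenvectorUnitary : Matrix (Fin n) (Fin n) ℂ) *
      star (hT.eigenvectorUnitary : Matrix (Fin n) (Fin n) ℂ) = 1 :=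
    Matrix.mem_unitaryGroup_iff.mp hT.eigenvectorUnitary.2
  rw [aux_conj hT c, Matrix.det_mul_right_comm, hU, one_mul, Matrix.det_diagonal]
  rw [← Complex.ofReal_prod, Complex.ofReal_re]

lemma aux_sandwich {n : ℕ} (U A B : Matrix (Fin n) (Fin n) ℂ) (h : star U * U = 1) :
    (U * A * star U) * (U * B * star U) = U * (A * B) * star U := by
  have h2 : ∀ X : Matrix (Fin n) (Fin n) ℂ, star U * (U * X) = X := fun X => by
    rw [← mul_assoc, h, one_mul]
  simp only [mul_assoc, h2]

open Matrix in
lemma aux_trace_re {n : ℕ} {T : Matrix (Fin n) (Fin n) ℂ} (hT : T.IsHermitian) (c : ℝ)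
    (hc : ∀ i, 1 + c * hT.eigenvalues i ≠ 0) :
    (Matrix.trace (T * (1 + ((c : ℝ) : ℂ) • T)⁻¹)).re =
      ∑ i, hT.eigenvalues i / (1 + c * hT.eigenvalues i) := by
  set U := (hT.eigenvectorUnitary : Matrix (Fin n) (Fin n) ℂ) with hUdef
  have hU : U * star U = 1 := Matrix.mem_unitaryGroup_iff.mp hT.eigenvectorUnitary.2
  have hU' : star U * U = 1 := Matrix.mem_unitaryGroup_iff'.mp hT.eigenvectorUnitary.2
  set g : Fin n → ℂ := fun i => (((1 + c * hT.eigenvalues i : ℝ) : ℂ))⁻¹ with hg_def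
  have hinv : (1 + ((c : ℝ) : ℂ) • T)⁻¹ = U * Matrix.diagonal g * star U := by
    apply Matrix.inv_eq_right_inv
    rw [aux_conj hT c, aux_sandwich _ _ _ hU', Matrix.diagonal_mul_diagonal]
    have : (fun i => ((1 + c * hT.eigenvalues i : ℝ) : ℂ) * g i) = fun _ => (1 : ℂ) := by
      funext i
      rw [hg_def, mul_inv_cancel₀]
      exact_mod_cast hc i
    rw [this, Matrix.diagonal_one, mul_one, hU]
  have hsp : T = U * Matrix.diagonal (RCLike.ofReal ∘ hT.eigenvalues) * star U :=
    hT.spectral_theorem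
  have step : T * (U * Matrix.diagonal g * star U) =
      U * (Matrix.diagonal (RCLike.ofReal ∘ hT.eigenvalues) * Matrix.diagonal g) * star U := by
    rw [← aux_sandwich _ _ _ hU', ← hsp]
  rw [hinv, step, Matrix.diagonal_mul_diagonal, Matrix.trace_mul_cycle, hU', one_mul,
    Matrix.trace_diagonal, Complex.re_sum]
  congr 1; funext i
  simp only [Function.comp, hg_def]
  have hcast : (RCLike.ofReal : ℝ → ℂ) = Complex.ofReal := rfl
  simp only [hcast]
  have : ((hT.eigenvalues i : ℝ) : ℂ) * (((1 + c * hT.eigenvalues i : ℝ) : ℂ))⁻¹ =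
      (((hT.eigenvalues i / (1 + c * hT.eigenvalues i) : ℝ)) : ℂ) := by
    push_cast; ring
  rw [this, Complex.ofReal_re]

lemma aux_log_bern {x p : ℝ} (hx : 0 ≤ x) (hp : 1 ≤ p) :
    Real.log (1 + x) ≤ p * Real.log (1 + x / p) := by
  have hp0 : 0 < p := lt_of_lt_of_le one_pos hp
  have hxp : (0:ℝ) ≤ x / p := by positivity
  have h1 : (1 : ℝ) + x ≤ (1 + x / p) ^ p := by
    have := one_add_mul_self_le_rpow_one_add (s := x / p) (by linarith) hp
    rwa [mul_div_cancel₀ _ (ne_of_gt hp0)] at this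
  calc Real.log (1 + x) ≤ Real.log ((1 + x / p) ^ p) :=
        Real.log_le_log (by linarith) h1
    _ = p * Real.log (1 + x / p) := Real.log_rpow (by linarith) p

lemma aux_log_ge {x : ℝ} (hx : 0 ≤ x) : x / (1 + x) ≤ Real.log (1 + x) := by
  have h1 : (0:ℝ) < 1 + x := by linarith
  have := Real.log_le_sub_one_of_pos (inv_pos.mpr h1)
  rw [Real.log_inv] at this
  have h2 : 1 - (1 + x)⁻¹ ≤ Real.log (1 + x) := by linarith
  have h3 : x / (1 + x) = 1 - (1 + x)⁻¹ := by field_simp; ring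
  linarith [h2, h3.le, h3.ge]

set_option maxHeartbeats 1000000 in
theorem stmt_9 {NT : ℕ} (T : Matrix (Fin NT) (Fin NT) ℂ) (hT : T.PosSemidef)
    (NS : ℕ) (ρ δ : ℝ) (hρ : 0 < ρ) (hδ : 0 ≤ δ)
    (hfix : δ = (1 / (NS : ℝ)) *
      (Matrix.trace (T * (1 + ((ρ / (1 + ρ * δ) : ℝ) : ℂ) • T)⁻¹)).re)
    (hr : T.rank < NS) :
    Real.log ((1 + ((ρ / (1 + ρ * δ) : ℝ) : ℂ) • T).det.re)
        + (NS : ℝ) * Real.log (1 + ρ * δ)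
        - (NS : ℝ) * (ρ * δ) / (1 + ρ * δ)
      ≥ (((NS : ℝ) - (T.rank : ℝ)) / (NS : ℝ)) *
          Real.log ((1 + ((ρ : ℝ) : ℂ) • T).det.re) := by
  classical
  have hH := hT.1
  set ev : Fin NT → ℝ := hH.eigenvalues with hev_def
  have hev : ∀ i, 0 ≤ ev i := hT.eigenvalues_nonneg
  have hs1 : (1:ℝ) ≤ 1 + ρ * δ := by nlinarith
  have hs0 : (0:ℝ) < 1 + ρ * δ := by linarith
  set a : ℝ := ρ / (1 + ρ * δ) with ha_def
  have ha : 0 < a := div_pos hρ hs0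
  have hposA : ∀ i, (0:ℝ) < 1 + a * ev i := fun i => by nlinarith [hev i, ha]
  have hposR : ∀ i, (0:ℝ) < 1 + ρ * ev i := fun i => by nlinarith [hev i]
  -- determinant identities
  have hdetA : (1 + ((a : ℝ) : ℂ) • T).det.re = ∏ i, (1 + a * ev i) := aux_det_re hH a
  have hdetR : (1 + ((ρ : ℝ) : ℂ) • T).det.re = ∏ i, (1 + ρ * ev i) := aux_det_re hH ρ
  -- trace identity
  have htr : (Matrix.trace (T * (1 + ((a : ℝ) : ℂ) • T)⁻¹)).re =
      ∑ i, ev i / (1 + a * ev i) :=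
    aux_trace_re hH a (fun i => ne_of_gt (hposA i))
  -- logs of dets are sums
  have hlogA : Real.log ((1 + ((a : ℝ) : ℂ) • T).det.re) = ∑ i, Real.log (1 + a * ev i) := by
    rw [hdetA, Real.log_prod (fun i _ => ne_of_gt (hposA i))]
  have hlogR : Real.log ((1 + ((ρ : ℝ) : ℂ) • T).det.re) = ∑ i, Real.log (1 + ρ * ev i) := by
    rw [hdetR, Real.log_prod (fun i _ => ne_of_gt (hposR i))]
  -- rank = number of nonzero eigenvalues
  set F : Finset (Fin NT) := Finset.univ.filter (fun i => ev i ≠ 0) with hF_def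
  have hrank : (T.rank : ℝ) = (F.card : ℝ) := by
    rw [hH.rank_eq_card_non_zero_eigs]
    norm_cast
    simp [hF_def, Fintype.card_subtype]
    rfl
  set r : ℝ := (T.rank : ℝ) with hr_def
  set N : ℝ := (NS : ℝ) with hN_def
  have hrN : r + 1 ≤ N := by
    have : (T.rank : ℝ) + 1 ≤ (NS : ℝ) := by exact_mod_cast Nat.succ_le_of_lt hr
    simpa [hr_def, hN_def] using this
  have hr0 : 0 ≤ r := Nat.cast_nonneg _
  have hN0 : (0:ℝ) < N := by linarith
  -- Step C : ρ δ (N - r) ≤ r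
  have hfix' : N * δ = ∑ i, ev i / (1 + a * ev i) := by
    rw [hfix, htr]
    field_simp
    exact Finset.sum_congr rfl (fun i _ => by rw [mul_comm (ev i) a])
  have hsum_le : ∑ i, ev i / (1 + a * ev i) ≤ r * ((1 + ρ * δ) / ρ) := by
    have hterm : ∀ i, ev i / (1 + a * ev i) ≤ if ev i = 0 then 0 else (1 + ρ * δ) / ρ := by
      intro i
      by_cases h : ev i = 0
      · simp [h]
      · simp only [h, if_false]
        have h1 : ev i / (1 + a * ev i) ≤ 1 / a := by
          rw [div_le_div_iff₀ (hposA i) ha]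
          nlinarith [hev i]
        have h2 : 1 / a = (1 + ρ * δ) / ρ := by
          rw [ha_def]
          field_simp
        linarith [h1, h2.le, h2.ge]
    calc ∑ i, ev i / (1 + a * ev i) ≤ ∑ i, (if ev i = 0 then 0 else (1 + ρ * δ) / ρ) :=
          Finset.sum_le_sum (fun i _ => hterm i)
      _ = ∑ i ∈ F, (1 + ρ * δ) / ρ := by
          rw [Finset.sum_ite, Finset.sum_const, Finset.sum_const, smul_zero, zero_add]
      _ = (F.card : ℝ) * ((1 + ρ * δ) / ρ) := by rw [Finset.sum_const, nsmul_eq_mul]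
      _ = r * ((1 + ρ * δ) / ρ) := by rw [hrank]
  have hC : ρ * δ * (N - r) ≤ r := by
    have h1 : N * δ ≤ r * ((1 + ρ * δ) / ρ) := hfix' ▸ hsum_le
    have h2 : N * δ * ρ ≤ r * (1 + ρ * δ) := by
      have := mul_le_mul_of_nonneg_right h1 hρ.le
      calc N * δ * ρ = N * δ * ρ := rfl
        _ ≤ r * ((1 + ρ * δ) / ρ) * ρ := this
        _ = r * (1 + ρ * δ) := by field_simp
    nlinarith
  -- Step D : (N - r)/N ≤ 1/(1+ρδ)
  have hD : (N - r) / N ≤ 1 / (1 + ρ * δ) := by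
    rw [div_le_div_iff₀ hN0 hs0]
    nlinarith
  -- Step B : pointwise log inequality
  have hB : ∀ i, (1 / (1 + ρ * δ)) * Real.log (1 + ρ * ev i) ≤ Real.log (1 + a * ev i) := by
    intro i
    have hx : 0 ≤ ρ * ev i := mul_nonneg hρ.le (hev i)
    have := aux_log_bern hx hs1
    have hax : a * ev i = (ρ * ev i) / (1 + ρ * δ) := by
      rw [ha_def]; ring
    rw [← hax] at this
    rw [div_mul_eq_mul_div, one_mul, div_le_iff₀ hs0]
    linarith [this]
  -- Step A : sum of logs nonneg
  have hSnn : 0 ≤ ∑ i, Real.log (1 + ρ * ev i) := by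
    apply Finset.sum_nonneg
    intro i _
    apply Real.log_nonneg
    nlinarith [hev i]
  -- combine
  set S : ℝ := ∑ i, Real.log (1 + ρ * ev i) with hS_def
  have hsum_ge : (1 / (1 + ρ * δ)) * S ≤ ∑ i, Real.log (1 + a * ev i) := by
    rw [hS_def, Finset.mul_sum]
    exact Finset.sum_le_sum (fun i _ => hB i)
  have hE : N * (ρ * δ) / (1 + ρ * δ) ≤ N * Real.log (1 + ρ * δ) := by
    have := aux_log_ge (mul_nonneg hρ.le hδ)
    calc N * (ρ * δ) / (1 + ρ * δ) = N * ((ρ * δ) / (1 + ρ * δ)) := by ring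
      _ ≤ N * Real.log (1 + ρ * δ) := by
          apply mul_le_mul_of_nonneg_left this hN0.le
  have hfinal : ((N - r) / N) * S ≤ (1 / (1 + ρ * δ)) * S :=
    mul_le_mul_of_nonneg_right hD hSnn
  rw [ge_iff_le, hlogR, hlogA]
  calc ((N - r) / N) * S ≤ (1 / (1 + ρ * δ)) * S := hfinal
    _ ≤ ∑ i, Real.log (1 + a * ev i) := hsum_ge
    _ ≤ ∑ i, Real.log (1 + a * ev i) + N * Real.log (1 + ρ * δ) - N * (ρ * δ) / (1 + ρ * δ) := by
        linarith
end

section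
/- Let R be positive definite Hermitian and define the LMMSE matrix Ψ(S) = R(I + σ^{-2}(R_R ⊗ R_T^{1/2} F S S^H F^H R_T^{1/2}))^{-1} with R = R_R ⊗ R_T. Then for a random matrix S with E[SS^H] = I, E_S[tr Ψ(S)] ≥ tr[R (I + σ^{-2}(R_R ⊗ R_T^{1/2} Φ R_T^{1/2}))^{-1}] where Φ = F F^H. -/
open scoped Kronecker ComplexOrder
open MeasureTheory

attribute [local instance] Matrix.frobeniusNormedAddCommGroup Matrix.frobeniusNormedSpace

section Helpers
open Matrix
set_option linter.unusedSectionVars false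

variable {m n p q : Type*} [Fintype m] [Fintype n] [DecidableEq m] [DecidableEq n]

lemma psd_factor' {W : Matrix n n ℂ} (hW : W.PosSemidef) : ∃ B : Matrix n n ℂ, W = Bᴴ * B := by
  open scoped MatrixOrder in
  exact CStarAlgebra.nonneg_iff_eq_star_mul_self.mp hW.nonneg

lemma retrace_nonneg' {W : Matrix n n ℂ} (hW : W.PosSemidef) : 0 ≤ (W.trace).re := by
  obtain ⟨B, rfl⟩ := psd_factor' hW
  rw [Matrix.trace]
  simp only [Matrix.diag, Matrix.mul_apply, Matrix.conjTranspose_apply]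
  rw [Complex.re_sum]
  refine Finset.sum_nonneg fun j _ => ?_
  rw [Complex.re_sum]
  refine Finset.sum_nonneg fun i _ => ?_
  simpa [Complex.normSq_apply] using Complex.normSq_nonneg (B i j)

lemma kron_conjTranspose' (A : Matrix m n ℂ) (B : Matrix p q ℂ) :
    (A ⊗ₖ B)ᴴ = Aᴴ ⊗ₖ Bᴴ := by
  ext ⟨i, j⟩ ⟨k, l⟩
  simp [Matrix.conjTranspose_apply, mul_comm]

lemma kron_posSemidef' {A : Matrix m m ℂ} {B : Matrix n n ℂ}
    (hA : A.PosSemidef) (hB : B.PosSemidef) : (A ⊗ₖ B).PosSemidef := by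
  obtain ⟨A1, hA1⟩ := psd_factor' hA
  obtain ⟨B1, hB1⟩ := psd_factor' hB
  rw [hA1, hB1, Matrix.mul_kronecker_mul, ← kron_conjTranspose']
  exact posSemidef_conjTranspose_mul_self _

lemma smul_posSemidef' {A : Matrix n n ℂ} (hA : A.PosSemidef) {a : ℝ} (ha : 0 ≤ a) :
    (a • A).PosSemidef := by
  rw [posSemidef_iff_dotProduct_mulVec]
  constructor
  · unfold Matrix.IsHermitian
    rw [Matrix.conjTranspose_smul, hA.1, star_trivial]
  · intro x
    rw [smul_mulVec a A x, dotProduct_smul a _ _, Complex.real_smul]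
    exact mul_nonneg (by exact_mod_cast ha) (hA.dotProduct_mulVec_nonneg x)

lemma smul_posDef' {A : Matrix n n ℂ} (hA : A.PosDef) {a : ℝ} (ha : 0 < a) :
    (a • A).PosDef := by
  rw [posDef_iff_dotProduct_mulVec]
  constructor
  · unfold Matrix.IsHermitian
    rw [Matrix.conjTranspose_smul, hA.1, star_trivial]
  · intro x hx
    rw [smul_mulVec a A x, dotProduct_smul a _ _, Complex.real_smul]
    exact mul_pos (by exact_mod_cast ha) (hA.dotProduct_mulVec_pos hx)

lemma key_ineq' {P : Matrix n n ℂ} (hP : P.PosDef) (V Z : Matrix n m ℂ) :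
    ((Zᴴ*V).trace + (Vᴴ*Z).trace - (Zᴴ*(P*Z)).trace).re ≤ ((Vᴴ*(P⁻¹*V)).trace).re := by
  have hQ : (P⁻¹)ᴴ = P⁻¹ := hP.posSemidef.inv.1
  have hd : IsUnit P.det := isUnit_iff_ne_zero.mpr (ne_of_gt hP.det_pos)
  have h1 : P * P⁻¹ = 1 := mul_nonsing_inv _ hd
  have h2 : P⁻¹ * P = 1 := nonsing_inv_mul _ hd
  have hc1 : ∀ X : Matrix n m ℂ, P * (P⁻¹ * X) = X := fun X => by
    rw [← Matrix.mul_assoc, h1, Matrix.one_mul]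
  have hc2 : ∀ X : Matrix n m ℂ, P⁻¹ * (P * X) = X := fun X => by
    rw [← Matrix.mul_assoc, h2, Matrix.one_mul]
  have hW := hP.posSemidef.conjTranspose_mul_mul_same (Z - P⁻¹*V)
  have h0 := retrace_nonneg' hW
  have hexp : (Z - P⁻¹*V)ᴴ * P * (Z - P⁻¹*V)
      = Zᴴ*(P*Z) - Zᴴ*V - Vᴴ*Z + Vᴴ*(P⁻¹*V) := by
    simp only [Matrix.conjTranspose_sub, Matrix.conjTranspose_mul, hQ, Matrix.sub_mul,
      Matrix.mul_sub, Matrix.mul_assoc, hc1, hc2]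
    abel
  rw [hexp] at h0
  simp only [Matrix.trace_add, Matrix.trace_sub, Complex.add_re, Complex.sub_re] at h0 ⊢
  linarith

lemma trace_mul_inv_convex' {R P₁ P₂ : Matrix n n ℂ} (hR : R.PosSemidef)
    (hP₁ : P₁.PosDef) (hP₂ : P₂.PosDef)
    {a b : ℝ} (ha : 0 ≤ a) (hb : 0 ≤ b) (hab : a + b = 1) :
    ((R * (a • P₁ + b • P₂)⁻¹).trace).re
      ≤ a * ((R * P₁⁻¹).trace).re + b * ((R * P₂⁻¹).trace).re := by
  rcases eq_or_lt_of_le ha with rfl | ha'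
  · have hb1 : b = 1 := by linarith
    subst hb1; simp
  rcases eq_or_lt_of_le hb with rfl | hb'
  · have ha1 : a = 1 := by linarith
    subst ha1; simp
  obtain ⟨B, hB⟩ := psd_factor' hR
  set V := Bᴴ with hV
  have hR' : R = V * Vᴴ := by rw [hV, conjTranspose_conjTranspose]; exact hB
  have htr : ∀ Q : Matrix n n ℂ, (R * Q).trace = (Vᴴ*(Q*V)).trace := fun Q => by
    rw [hR', Matrix.mul_assoc, Matrix.trace_mul_comm, Matrix.mul_assoc]
  set Pb := a • P₁ + b • P₂ with hPb
  have hPbd : Pb.PosDef :=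
    (smul_posDef' hP₁ ha').add_posSemidef (smul_posSemidef' hP₂.posSemidef hb)
  have hQ : (Pb⁻¹)ᴴ = Pb⁻¹ := hPbd.posSemidef.inv.1
  have hd : IsUnit Pb.det := isUnit_iff_ne_zero.mpr (ne_of_gt hPbd.det_pos)
  have h1 : ∀ X : Matrix n n ℂ, Pb * (Pb⁻¹ * X) = X := fun X => by
    rw [← Matrix.mul_assoc, mul_nonsing_inv _ hd, Matrix.one_mul]
  set Z := Pb⁻¹ * V with hZ
  have hZH : Zᴴ = Vᴴ * Pb⁻¹ := by rw [hZ, Matrix.conjTranspose_mul, hQ]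
  have hZV : Zᴴ*V = Vᴴ*(Pb⁻¹*V) := by rw [hZH, Matrix.mul_assoc]
  have hVZ : Vᴴ*Z = Vᴴ*(Pb⁻¹*V) := by rw [hZ]
  have hZPZ : Zᴴ*(Pb*Z) = Vᴴ*(Pb⁻¹*V) := by rw [hZ, h1, hZH, Matrix.mul_assoc]
  have hsplit : (Zᴴ*(Pb*Z)).trace = a • (Zᴴ*(P₁*Z)).trace + b • (Zᴴ*(P₂*Z)).trace := by
    rw [hPb, Matrix.add_mul, Matrix.mul_add, Matrix.smul_mul, Matrix.smul_mul,
      Matrix.mul_smul, Matrix.mul_smul, Matrix.trace_add, Matrix.trace_smul, Matrix.trace_smul]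
  have hk1 := key_ineq' hP₁ V Z
  have hk2 := key_ineq' hP₂ V Z
  have hmain : ((R * Pb⁻¹).trace).re
      = ((Zᴴ*V).trace + (Vᴴ*Z).trace - (Zᴴ*(Pb*Z)).trace).re := by
    rw [htr, hZV, hVZ, hZPZ]; ring_nf
  rw [hmain, htr P₁⁻¹, htr P₂⁻¹, hsplit]
  simp only [Complex.add_re, Complex.sub_re, Complex.real_smul, Complex.mul_re,
    Complex.ofReal_re, Complex.ofReal_im, zero_mul, sub_zero]
  simp only [Complex.add_re, Complex.sub_re] at hk1 hk2
  have e : (Zᴴ * V).trace.re + (Vᴴ * Z).trace.re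
        - (a * (Zᴴ * (P₁ * Z)).trace.re + b * (Zᴴ * (P₂ * Z)).trace.re)
      = a*((Zᴴ * V).trace.re + (Vᴴ * Z).trace.re - (Zᴴ * (P₁ * Z)).trace.re)
        + b*((Zᴴ * V).trace.re + (Vᴴ * Z).trace.re - (Zᴴ * (P₂ * Z)).trace.re) := by
    have hb1 : b = 1 - a := by linarith
    rw [hb1]; ring
  linarith [mul_le_mul_of_nonneg_left hk1 ha, mul_le_mul_of_nonneg_left hk2 hb, e]

end Helpers

open Matrix in
/-- Jensen lower bound for the ergodic LMMSE: with `R = R_R ⊗ R_T` and `Φ = F Fᴴ`,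
`E_S tr Ψ(S) ≥ tr[R (I + σ⁻²(R_R ⊗ R_T^{1/2} Φ R_T^{1/2}))⁻¹]`. -/
theorem stmt_12 {NR NT NS : ℕ}
    {Ω : Type*} [MeasureSpace Ω] (μ : Measure Ω) [IsProbabilityMeasure μ]
    (S : Ω → Matrix (Fin NT) (Fin NS) ℂ)
    (RR : Matrix (Fin NR) (Fin NR) ℂ) (hRR : RR.PosSemidef)
    (RT : Matrix (Fin NT) (Fin NT) ℂ) (hRT : RT.PosSemidef)
    (F : Matrix (Fin NT) (Fin NT) ℂ) (σ : ℝ) (hσ : 0 < σ)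
    (hRpos : (RR ⊗ₖ RT).PosDef)
    (hSint : @Integrable _ _ SeminormedAddGroup.toContinuousENorm _ _ (fun ω => S ω * (S ω).conjTranspose) μ)
    (hE : (∫ ω, S ω * (S ω).conjTranspose ∂μ) = 1)
    (hfint : Integrable (fun ω => (Matrix.trace ((RR ⊗ₖ RT) *
      (1 + (σ ^ 2)⁻¹ •
        (RR ⊗ₖ (hRT.1.cfc Real.sqrt * F * (S ω * (S ω).conjTranspose) * F.conjTranspose * hRT.1.cfc Real.sqrt)))⁻¹)).re) μ) :
    (∫ ω, (Matrix.trace ((RR ⊗ₖ RT) *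
        (1 + (σ ^ 2)⁻¹ •
          (RR ⊗ₖ (hRT.1.cfc Real.sqrt * F * (S ω * (S ω).conjTranspose) * F.conjTranspose * hRT.1.cfc Real.sqrt)))⁻¹)).re ∂μ)
      ≥ (Matrix.trace ((RR ⊗ₖ RT) *
        (1 + (σ ^ 2)⁻¹ •
          (RR ⊗ₖ (hRT.1.cfc Real.sqrt * (F * F.conjTranspose) * hRT.1.cfc Real.sqrt)))⁻¹)).re := by
  classical
  set c : ℝ := (σ ^ 2)⁻¹ with hc
  have hc0 : 0 ≤ c := by positivity
  set N : Matrix (Fin NT) (Fin NT) ℂ := hRT.1.cfc Real.sqrt * F with hN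
  have hNH : Nᴴ = F.conjTranspose * hRT.1.cfc Real.sqrt := by
    rw [hN, Matrix.conjTranspose_mul, (show (hRT.1.cfc Real.sqrt)ᴴ = hRT.1.cfc Real.sqrt from by
      rw [← hRT.1.cfc_eq Real.sqrt]; exact (cfc_predicate (p := IsSelfAdjoint) Real.sqrt RT).star_eq)]
  have hform : ∀ X : Matrix (Fin NT) (Fin NT) ℂ,
      hRT.1.cfc Real.sqrt * F * X * F.conjTranspose * hRT.1.cfc Real.sqrt = N * X * Nᴴ := fun X => by
    rw [hNH, hN, Matrix.mul_assoc (hRT.1.cfc Real.sqrt * F * X)]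
  have hRHS : hRT.1.cfc Real.sqrt * (F * F.conjTranspose) * hRT.1.cfc Real.sqrt = N * 1 * Nᴴ := by
    rw [hNH, hN]
    simp [Matrix.mul_assoc]
  set R0 : Matrix (Fin NR × Fin NT) (Fin NR × Fin NT) ℂ := RR ⊗ₖ RT with hR0
  set A : Matrix (Fin NT) (Fin NT) ℂ → Matrix (Fin NR × Fin NT) (Fin NR × Fin NT) ℂ :=
    fun X => 1 + c • (RR ⊗ₖ (N * X * Nᴴ)) with hA
  set g : Matrix (Fin NT) (Fin NT) ℂ → ℝ := fun X => ((R0 * (A X)⁻¹).trace).re with hg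
  set s : Set (Matrix (Fin NT) (Fin NT) ℂ) := {X | X.PosSemidef} with hs
  -- A X is PosDef for X PSD
  have hAposdef : ∀ X ∈ s, (A X).PosDef := by
    intro X hX
    have h1 : (N * X * Nᴴ).PosSemidef := hX.mul_mul_conjTranspose_same N
    have h2 := kron_posSemidef' hRR h1
    have h3 := smul_posSemidef' h2 hc0
    exact Matrix.PosDef.one.add_posSemidef h3
  -- A is affine on convex combinations
  have hAaff : ∀ (X Y : Matrix (Fin NT) (Fin NT) ℂ) (a b : ℝ), a + b = 1 →
      A (a • X + b • Y) = a • A X + b • A Y := by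
    intro X Y a b hab
    simp only [hA]
    rw [Matrix.mul_add, Matrix.add_mul, Matrix.mul_smul, Matrix.mul_smul,
      Matrix.smul_mul, Matrix.smul_mul, Matrix.kronecker_add, Matrix.kronecker_smul,
      Matrix.kronecker_smul]
    have hb : b = 1 - a := by linarith
    rw [hb]
    module
  -- convexity of the set and of g
  have hsconv : Convex ℝ s := by
    intro X hX Y hY a b ha hb hab
    exact (smul_posSemidef' hX ha).add (smul_posSemidef' hY hb)
  have hgconv : ConvexOn ℝ s g := by
    refine ⟨hsconv, fun X hX Y hY a b ha hb hab => ?_⟩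
    simp only [hg, smul_eq_mul]
    rw [hAaff X Y a b hab]
    exact trace_mul_inv_convex' hRpos.posSemidef (hAposdef X hX) (hAposdef Y hY) ha hb hab
  -- s is closed
  have hclosed : IsClosed s := by
    have hseq : s = {X : Matrix (Fin NT) (Fin NT) ℂ | Xᴴ = X}
        ∩ ⋂ (x : Fin NT → ℂ), {X | 0 ≤ star x ⬝ᵥ (X *ᵥ x)} := by
      ext X
      simp only [hs, Set.mem_setOf_eq, Set.mem_inter_iff, Set.mem_iInter]
      exact posSemidef_iff_dotProduct_mulVec
    rw [hseq]
    refine IsClosed.inter ?_ (isClosed_iInter fun x => ?_)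
    · exact isClosed_eq (continuous_id.matrix_conjTranspose) continuous_id
    · have hcont : Continuous fun X : Matrix (Fin NT) (Fin NT) ℂ => star x ⬝ᵥ (X *ᵥ x) :=
        continuous_const.dotProduct (continuous_id.matrix_mulVec continuous_const)
      have hcl : IsClosed {z : ℂ | 0 ≤ z} := by
        have : {z : ℂ | 0 ≤ z} = Complex.re ⁻¹' (Set.Ici 0) ∩ Complex.im ⁻¹' {0} := by
          ext z
          simp [Complex.le_def, eq_comm]
        rw [this]
        exact (isClosed_Ici.preimage Complex.continuous_re).inter
          (isClosed_singleton.preimage Complex.continuous_im)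
      exact hcl.preimage hcont
  -- g is continuous on s
  have hAc : Continuous A := by
    refine continuous_const.add (Continuous.const_smul ?_ c)
    have hM : Continuous fun X : Matrix (Fin NT) (Fin NT) ℂ => N * X * Nᴴ :=
      (continuous_const.matrix_mul continuous_id).matrix_mul continuous_const
    refine continuous_matrix fun i j => ?_
    simp only [Matrix.kroneckerMap_apply]
    exact continuous_const.mul (hM.matrix_elem _ _)
  have hgcont : ContinuousOn g s := by
    intro X hX
    apply ContinuousAt.continuousWithinAt
    have hdet : (A X).det ≠ 0 := ne_of_gt (hAposdef X hX).det_pos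
    have hinvfun : (fun Y => (A Y)⁻¹) = fun Y => (A Y).det⁻¹ • (A Y).adjugate := by
      funext Y
      rw [Matrix.inv_def, Ring.inverse_eq_inv]
    have hinv : ContinuousAt (fun Y => (A Y)⁻¹) X := by
      rw [hinvfun]
      exact ContinuousAt.smul ((hAc.matrix_det).continuousAt.inv₀ hdet)
        (hAc.matrix_adjugate).continuousAt
    exact (Complex.continuous_re).continuousAt.comp
      (((continuous_const.matrix_mul continuous_id).matrix_trace).continuousAt.comp hinv)
  -- rewrite the goal and hfint in terms of g
  have hmem : ∀ᵐ ω ∂μ, (S ω * (S ω).conjTranspose) ∈ s :=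
    Filter.Eventually.of_forall fun ω => Matrix.posSemidef_self_mul_conjTranspose _
  simp only [hform, hRHS]
  have hfint' : Integrable (g ∘ fun ω => S ω * (S ω).conjTranspose) μ := by
    refine hfint.congr (Filter.Eventually.of_forall fun ω => ?_)
    simp only [Function.comp_apply, hg, hA, hNH, Matrix.mul_assoc]
  have hJ := hgconv.map_integral_le hgcont hclosed hmem hSint hfint'
  rw [hE] at hJ
  simp only [hg, hA, hNH, Matrix.mul_assoc] at hJ ⊢
  exact hJ
end

section
/- For ρ > 0 and a positive semidefinite Hermitian matrix T, the fixed-point equation δ = (1/N_S) tr(T (I + (ρ/(1+ρδ)) T)^{-1}) has a unique nonnegative solution δ(ρ). -/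
open scoped ComplexOrder
open Matrix Finset

lemma fp_unique (n : ℕ) (lam : Fin n → ℝ) (hlam : ∀ i, 0 ≤ lam i)
    (NS : ℕ) (hNS : 0 < NS) (ρ : ℝ) (hρ : 0 < ρ) :
    ∃! δ : ℝ, 0 ≤ δ ∧
      δ = (1 / (NS : ℝ)) * ∑ i, lam i * (1 + ρ * δ) / (1 + ρ * δ + ρ * lam i) := by
  have hNS' : (0:ℝ) < NS := by exact_mod_cast hNS
  set f : ℝ → ℝ := fun δ => (1 / (NS : ℝ)) * ∑ i, lam i * (1 + ρ * δ) / (1 + ρ * δ + ρ * lam i)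
    with hf
  -- denominators positive
  have hden : ∀ (δ : ℝ), 0 ≤ δ → ∀ i, 0 < 1 + ρ * δ + ρ * lam i := by
    intro δ hδ i
    nlinarith [hlam i, mul_nonneg hρ.le hδ, mul_nonneg hρ.le (hlam i)]
  -- f nonneg on δ ≥ 0
  have hf_nonneg : ∀ δ : ℝ, 0 ≤ δ → 0 ≤ f δ := by
    intro δ hδ
    apply mul_nonneg (by positivity)
    apply Finset.sum_nonneg
    intro i _
    apply div_nonneg _ (hden δ hδ i).le
    have : 0 ≤ 1 + ρ * δ := by nlinarith [mul_nonneg hρ.le hδ]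
    exact mul_nonneg (hlam i) this
  set M : ℝ := (1 / (NS : ℝ)) * ∑ i, lam i with hM
  have hM0 : 0 ≤ M := by
    apply mul_nonneg (by positivity)
    exact Finset.sum_nonneg fun i _ => hlam i
  have hf_le : ∀ δ : ℝ, 0 ≤ δ → f δ ≤ M := by
    intro δ hδ
    apply mul_le_mul_of_nonneg_left _ (by positivity)
    apply Finset.sum_le_sum
    intro i _
    rw [div_le_iff₀ (hden δ hδ i)]
    nlinarith [hlam i, mul_nonneg hρ.le hδ, mul_nonneg hρ.le (hlam i),
      mul_nonneg (hlam i) (mul_nonneg hρ.le (hlam i))]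
  -- uniqueness core
  have huniq : ∀ a b : ℝ, 0 ≤ a → 0 ≤ b → a = f a → b = f b → a = b := by
    have key : ∀ a b : ℝ, 0 ≤ a → 0 ≤ b → a = f a → b = f b → a < b → False := by
      intro a b ha hb hfa hfb hab
      have hpa : (0:ℝ) < 1 + ρ * a := by nlinarith [mul_nonneg hρ.le ha]
      have hpb : (0:ℝ) < 1 + ρ * b := by nlinarith [mul_nonneg hρ.le hb]
      have hsa : (NS:ℝ) * a = ∑ i, lam i * (1 + ρ * a) / (1 + ρ * a + ρ * lam i) := by
        conv_lhs => rw [hfa]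
        simp only [hf]
        field_simp
        exact Finset.sum_congr rfl fun i _ => by ring
      have hsb : (NS:ℝ) * b = ∑ i, lam i * (1 + ρ * b) / (1 + ρ * b + ρ * lam i) := by
        conv_lhs => rw [hfb]
        simp only [hf]
        field_simp
        exact Finset.sum_congr rfl fun i _ => by ring
      set S : ℝ := ∑ i, ρ * lam i / (1 + ρ * a + ρ * lam i) with hS
      -- termwise bound
      have hterm : ∀ i : Fin n,
          lam i * (1 + ρ * b) / (1 + ρ * b + ρ * lam i)
            - lam i * (1 + ρ * a) / (1 + ρ * a + ρ * lam i)
          ≤ (b - a) * (ρ * lam i / (1 + ρ * a + ρ * lam i)) := by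
        intro i
        have hDa := hden a ha i
        have hDb := hden b hb i
        have h1 : lam i * (1 + ρ * b) / (1 + ρ * b + ρ * lam i)
            - lam i * (1 + ρ * a) / (1 + ρ * a + ρ * lam i)
            = (b - a) * (ρ * lam i) * (ρ * lam i)
              / ((1 + ρ * a + ρ * lam i) * (1 + ρ * b + ρ * lam i)) := by
          rw [div_sub_div _ _ hDb.ne' hDa.ne', div_eq_div_iff (mul_ne_zero hDb.ne' hDa.ne') (mul_ne_zero hDa.ne' hDb.ne')]
          ring
        have hR : (b - a) * (ρ * lam i / (1 + ρ * a + ρ * lam i))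
            = (b - a) * (ρ * lam i) * (1 + ρ * b + ρ * lam i)
              / ((1 + ρ * a + ρ * lam i) * (1 + ρ * b + ρ * lam i)) := by
          rw [mul_div_assoc', div_eq_div_iff hDa.ne' (mul_ne_zero hDa.ne' hDb.ne')]
          ring
        rw [h1, hR]
        have h2 : ρ * lam i ≤ 1 + ρ * b + ρ * lam i := by nlinarith
        have h3 : 0 ≤ (b - a) * (ρ * lam i) := by
          exact mul_nonneg (by linarith) (mul_nonneg hρ.le (hlam i))
        exact div_le_div_of_nonneg_right (mul_le_mul_of_nonneg_left h2 h3) (mul_pos hDa hDb).le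
      have hsum : (NS:ℝ) * b - (NS:ℝ) * a ≤ (b - a) * S := by
        rw [hsa, hsb, ← Finset.sum_sub_distrib, hS, Finset.mul_sum]
        exact Finset.sum_le_sum fun i _ => hterm i
      have hSval : (1 + ρ * a) * S = ρ * ((NS:ℝ) * a) := by
        rw [hS, hsa, Finset.mul_sum, Finset.mul_sum]
        apply Finset.sum_congr rfl
        intro i _
        have hDa := (hden a ha i).ne'
        field_simp
      have hfin := mul_le_mul_of_nonneg_right hsum hpa.le
      nlinarith [mul_pos hNS' (sub_pos.2 hab), mul_le_mul_of_nonneg_left hSval.le (sub_nonneg.2 hab.le)]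
    intro a b ha hb hfa hfb
    rcases lt_trichotomy a b with h | h | h
    · exact absurd h (fun h => key a b ha hb hfa hfb h)
    · exact h
    · exact absurd h (fun h => key b a hb ha hfb hfa h)
  -- existence via IVT
  have hcont : ContinuousOn (fun δ => δ - f δ) (Set.Icc 0 M) := by
    apply ContinuousOn.sub continuousOn_id
    apply ContinuousOn.mul continuousOn_const
    apply continuousOn_finset_sum
    intro i _
    apply ContinuousOn.div
    · fun_prop
    · fun_prop
    · intro x hx
      exact (hden x hx.1 i).ne'
  have hIVT := intermediate_value_Icc hM0 hcont
  have h0mem : (0:ℝ) ∈ Set.Icc ((fun δ => δ - f δ) 0) ((fun δ => δ - f δ) M) := by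
    constructor
    · simp only
      have := hf_nonneg 0 le_rfl
      linarith
    · simp only
      have := hf_le M hM0
      linarith
  obtain ⟨δ, hδmem, hδeq⟩ := hIVT h0mem
  have hδ0 : 0 ≤ δ := hδmem.1
  have hδfix : δ = f δ := by
    have : δ - f δ = 0 := hδeq
    linarith
  exact ⟨δ, ⟨hδ0, hδfix⟩, fun y hy => huniq y δ hy.1 hδ0 hy.2 hδfix⟩


lemma trace_re_eq {NT : ℕ} (T : Matrix (Fin NT) (Fin NT) ℂ) (hT : T.PosSemidef)
    (c : ℝ) (hc : 0 ≤ c) :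
    (Matrix.trace (T * (1 + (c : ℂ) • T)⁻¹)).re
      = ∑ i, hT.1.eigenvalues i / (1 + c * hT.1.eigenvalues i) := by
  set lam := hT.1.eigenvalues with hlamdef
  have hlam : ∀ i, 0 ≤ lam i := hT.eigenvalues_nonneg
  have hpos : ∀ i, (0:ℝ) < 1 + c * lam i := fun i => by nlinarith [hlam i, mul_nonneg hc (hlam i)]
  set U : Matrix (Fin NT) (Fin NT) ℂ := (hT.1.eigenvectorUnitary : Matrix (Fin NT) (Fin NT) ℂ) with hUdef
  have hUU : U * star U = 1 := mem_unitaryGroup_iff.mp (hT.1.eigenvectorUnitary).2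
  have hU'U : star U * U = 1 := mem_unitaryGroup_iff'.mp (hT.1.eigenvectorUnitary).2
  set D : Matrix (Fin NT) (Fin NT) ℂ := diagonal (fun i => (lam i : ℂ)) with hDdef
  have hspec : T = U * D * star U := by
    have := hT.1.spectral_theorem
    convert this using 2
    rfl
  set d : Matrix (Fin NT) (Fin NT) ℂ := diagonal (fun i => ((1 + c * lam i : ℝ) : ℂ)) with hddef
  set d' : Matrix (Fin NT) (Fin NT) ℂ :=
    diagonal (fun i => (((1 + c * lam i : ℝ) : ℂ))⁻¹) with hd'def
  have hdd' : d * d' = 1 := by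
    have he : (fun i => ((1 + c * lam i : ℝ) : ℂ) * (((1 + c * lam i : ℝ) : ℂ))⁻¹)
        = fun _ => (1:ℂ) :=
      funext fun i => mul_inv_cancel₀ (by exact_mod_cast (hpos i).ne')
    rw [hddef, hd'def, diagonal_mul_diagonal, he, diagonal_one]
  have hd1 : d = 1 + (c : ℂ) • D := by
    ext i j
    rcases eq_or_ne i j with h | h
    · subst h
      simp [hddef, hDdef, Matrix.one_apply_eq]
    · simp [hddef, hDdef, Matrix.one_apply_ne h, diagonal_apply_ne _ h]
  have h1 : 1 + (c : ℂ) • T = U * d * star U := by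
    rw [hd1, hspec, mul_add, add_mul, mul_one, hUU, Matrix.mul_smul, Matrix.smul_mul]
  have h2 : (1 + (c : ℂ) • T)⁻¹ = U * d' * star U := by
    rw [h1]
    apply inv_eq_right_inv
    simp only [mul_assoc]
    rw [← mul_assoc (star U) U _, hU'U, one_mul, ← mul_assoc d d', hdd', one_mul, hUU]
  have h3 : T * (1 + (c : ℂ) • T)⁻¹ = U * (D * d') * star U := by
    rw [h2, hspec]
    simp only [mul_assoc]
    rw [← mul_assoc (star U) U _, hU'U, one_mul]
  have h4 : Matrix.trace (T * (1 + (c : ℂ) • T)⁻¹) = ∑ i, ((lam i / (1 + c * lam i) : ℝ) : ℂ) := by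
    rw [h3, Matrix.trace_mul_cycle, ← mul_assoc, hU'U, one_mul, hDdef, hd'def,
      diagonal_mul_diagonal, trace_diagonal]
    apply Finset.sum_congr rfl
    intro i _
    rw [div_eq_mul_inv]
    push_cast
    ring
  rw [h4]
  norm_cast


theorem stmt_16 {NT : ℕ} (T : Matrix (Fin NT) (Fin NT) ℂ) (hT : T.PosSemidef)
    (NS : ℕ) (hNS : 0 < NS) (ρ : ℝ) (hρ : 0 < ρ) :
    ∃! δ : ℝ, 0 ≤ δ ∧ δ = (1 / (NS : ℝ)) *
      (Matrix.trace (T * (1 + ((ρ / (1 + ρ * δ) : ℝ) : ℂ) • T)⁻¹)).re := by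
  have hlam : ∀ i, 0 ≤ hT.1.eigenvalues i := hT.eigenvalues_nonneg
  obtain ⟨δ, ⟨hδ0, hδeq⟩, huniq⟩ := fp_unique NT hT.1.eigenvalues hlam NS hNS ρ hρ
  have hequiv : ∀ x : ℝ, 0 ≤ x →
      (1 / (NS : ℝ)) * (Matrix.trace (T * (1 + ((ρ / (1 + ρ * x) : ℝ) : ℂ) • T)⁻¹)).re
        = (1 / (NS : ℝ)) * ∑ i, hT.1.eigenvalues i * (1 + ρ * x)
            / (1 + ρ * x + ρ * hT.1.eigenvalues i) := by
    intro x hx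
    have hpx : (0:ℝ) < 1 + ρ * x := by nlinarith [mul_nonneg hρ.le hx]
    have hc : 0 ≤ ρ / (1 + ρ * x) := div_nonneg hρ.le hpx.le
    rw [trace_re_eq T hT _ hc]
    congr 1
    apply Finset.sum_congr rfl
    intro i _
    have h1 : (1:ℝ) + ρ * x ≠ 0 := hpx.ne'
    have h2 : (0:ℝ) < 1 + ρ / (1 + ρ * x) * hT.1.eigenvalues i := by
      have := mul_nonneg hc (hlam i)
      linarith
    have h3 : (0:ℝ) < 1 + ρ * x + ρ * hT.1.eigenvalues i := by
      nlinarith [mul_nonneg hρ.le (hlam i)]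
    rw [div_eq_div_iff h2.ne' h3.ne']
    field_simp
  refine ⟨δ, ⟨hδ0, ?_⟩, ?_⟩
  · rw [hequiv δ hδ0]
    exact hδeq
  · intro y hy
    refine huniq y ⟨hy.1, ?_⟩
    rw [← hequiv y hy.1]
    exact hy.2
end
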